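/- For every finitely supported c : ℤ[i] → ℂ and every integer q ≥ 1, define S''_q = Σ_{z₁ = u₁+iv₁, z₂ = u₂+iv₂ ∈ ℤ[i], u₁v₂ ≡ u₂v₁ (mod q), gcd(u₁v₁, q) = gcd(u₂v₂, q) = 1} c(z₁)·conj(c(z₂)). Then S''_q = (1/q)·Σ_{a mod q} |Σ_{z = u+iv, gcd(uv,q)=1} c(z)·e(a·u·v*/q)|² = (1/q)·Σ_{a mod q} |Σ_{z = u+iv, gcd(uv,q)=1} c(z)·e(a·u*·v/q)|², where u* and v* denote the multiplicative inverses of u and v modulo q. -/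

import Mathlib

open scoped ComplexConjugate
open scoped Classical

noncomputable section

/-- `z = u+iv` is *odd primitive*: `u ≢ v (mod 2)`, `gcd(u,v) = 1`, `uv ≠ 0`. -/
def OddPrimitive (z : GaussianInt) : Prop :=
  ¬ z.re ≡ z.im [ZMOD 2] ∧ Int.gcd z.re z.im = 1 ∧ z.re * z.im ≠ 0

/-- The determinant sum `S_q = ∑_{u₁v₂ ≡ u₂v₁ (mod q)} c(z₁) conj (c(z₂))`. -/
def detSum (c : GaussianInt → ℂ) (q : ℕ) : ℂ :=
  ∑ᶠ z₁ : GaussianInt, ∑ᶠ z₂ : GaussianInt,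
    if (q : ℤ) ∣ (z₁.re * z₂.im - z₂.re * z₁.im) then c z₁ * conj (c z₂) else 0

/-- The reduced determinant sum `S'_q`, with the extra condition `gcd(v₁v₂, q) = 1`. -/
def detSum' (c : GaussianInt → ℂ) (q : ℕ) : ℂ :=
  ∑ᶠ z₁ : GaussianInt, ∑ᶠ z₂ : GaussianInt,
    if (q : ℤ) ∣ (z₁.re * z₂.im - z₂.re * z₁.im) ∧ Int.gcd (z₁.im * z₂.im) q = 1
    then c z₁ * conj (c z₂) else 0

/-- `S(Q,X) = ∑_{1 ≤ q ≤ Q} S_q` (the dependence on `X` is through the support of `c`). -/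
def SQX (c : GaussianInt → ℂ) (Q : ℝ) : ℂ :=
  ∑ q ∈ Finset.Icc 1 ⌊Q⌋₊, detSum c q

/-- `c` is supported on odd primitive Gaussian integers `z` with `1 < |z|² ≤ X`. -/
def SuppOK (c : GaussianInt → ℂ) (X : ℝ) : Prop :=
  ∀ z : GaussianInt, c z ≠ 0 →
    OddPrimitive z ∧ 1 < (Zsqrtd.norm z : ℝ) ∧ (Zsqrtd.norm z : ℝ) ≤ X

/-- The Siegel–Walfisz condition with exponent `B` and constant `K`. -/
def SWCond (c : GaussianInt → ℂ) (X B K : ℝ) : Prop :=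
  ∀ (k ℓ : ℕ), 1 ≤ ℓ → ∀ (α : GaussianInt) (t : ℝ),
    norm (∑ᶠ z : GaussianInt,
        if z ≠ 0 ∧ (ℓ : GaussianInt) ∣ (z - α) then
          c z * (conj (GaussianInt.toComplex z) / GaussianInt.toComplex z) ^ k *
            (norm (GaussianInt.toComplex z) : ℂ) ^ ((t : ℂ) * Complex.I)
        else 0)
      ≤ K * (ℓ : ℝ) ^ 2 * ((k : ℝ) ^ 2 + 1) * (t ^ 2 + 1) * X * Real.log X ^ (-B)

/-- The additive character `x ↦ e(x/q)` on `ℤ/qℤ`. -/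
def eChar (q : ℕ) (x : ZMod q) : ℂ :=
  Complex.exp (2 * Real.pi * Complex.I * ((x.val : ℂ) / (q : ℂ)))

/-- The doubly-restricted determinant sum `S''_q`, with `gcd(u₁v₁,q) = gcd(u₂v₂,q) = 1`. -/
def detSum'' (c : GaussianInt → ℂ) (q : ℕ) : ℂ :=
  ∑ᶠ z₁ : GaussianInt, ∑ᶠ z₂ : GaussianInt,
    if (q : ℤ) ∣ (z₁.re * z₂.im - z₂.re * z₁.im) ∧
        Int.gcd (z₁.re * z₁.im) q = 1 ∧ Int.gcd (z₂.re * z₂.im) q = 1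
    then c z₁ * conj (c z₂) else 0

/-! Expanding the square and summing over `a` first, orthogonality of the additive characters
`a ↦ e(a y / q)` shows that for any weight `w` and any key `x : ℤ[i] → ℤ/qℤ`,
`q⁻¹ ∑_a |∑_z w(z) e(a x(z) / q)|² = ∑_{x(z₁) = x(z₂)} w(z₁) conj (w(z₂))`.
When `u₁v₁` and `u₂v₂` are units mod `q`, the congruence `u₁v₂ ≡ u₂v₁` is equivalent both to
`u₁v₁* ≡ u₂v₂*` and to `u₁*v₁ ≡ u₂*v₂`, so either key applies to `c` restricted to `(uv, q) = 1`. -/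

open Finset

lemma eChar_eq_stdAddChar (q : ℕ) [NeZero q] (x : ZMod q) : eChar q x = ZMod.stdAddChar x := by
  rw [ZMod.stdAddChar_apply, ZMod.toCircle_apply, eChar, mul_div_assoc]

lemma sum_range_natCast_eq_sum_zmod {M : Type*} [AddCommMonoid M] {q : ℕ} [NeZero q]
    (f : ZMod q → M) : ∑ a ∈ range q, f a = ∑ a : ZMod q, f a :=
  sum_bij' (fun a _ => a) (fun x _ => x.val) (by simp) (by simp [ZMod.val_lt])
    (fun a ha => ZMod.val_cast_of_lt (mem_range.mp ha)) (fun x _ => ZMod.natCast_zmod_val x)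
    (fun _ _ => rfl)

lemma sum_range_eChar_mul {q : ℕ} [NeZero q] (x : ZMod q) :
    ∑ a ∈ range q, eChar q (a * x) = if x = 0 then (q : ℂ) else 0 := by
  simp only [eChar_eq_stdAddChar]
  rw [sum_range_natCast_eq_sum_zmod (fun a => ZMod.stdAddChar (a * x)),
    AddChar.sum_mulShift x (ZMod.isPrimitive_stdAddChar q), ZMod.card]
  split_ifs <;> simp

lemma sum_range_norm_sq_sum_eChar_mul {α : Type*} {q : ℕ} [NeZero q] (s : Finset α)
    (w : α → ℂ) (x : α → ZMod q) :
    ∑ a ∈ range q, (‖∑ z ∈ s, w z * eChar q (a * x z)‖ : ℂ) ^ 2 =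
      q * ∑ z₁ ∈ s, ∑ z₂ ∈ s, if x z₁ = x z₂ then w z₁ * conj (w z₂) else 0 := by
  have expand : ∀ a : ZMod q, (‖∑ z ∈ s, w z * eChar q (a * x z)‖ : ℂ) ^ 2 =
      ∑ z₁ ∈ s, ∑ z₂ ∈ s, w z₁ * conj (w z₂) * eChar q (a * (x z₁ - x z₂)) := by
    intro a
    rw [← Complex.mul_conj', map_sum, sum_mul_sum]
    refine sum_congr rfl fun z₁ _ => sum_congr rfl fun z₂ _ => ?_
    rw [eChar_eq_stdAddChar, eChar_eq_stdAddChar, eChar_eq_stdAddChar, mul_sub,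
      sub_eq_add_neg, AddChar.map_add_eq_mul, AddChar.map_neg_eq_conj, map_mul (starRingEnd ℂ)]
    ring
  simp only [expand]
  rw [sum_comm, mul_sum]
  refine sum_congr rfl fun z₁ _ => ?_
  rw [sum_comm, mul_sum]
  refine sum_congr rfl fun z₂ _ => ?_
  rw [← mul_sum, sum_range_eChar_mul]
  simp only [sub_eq_zero]
  split_ifs <;> ring

lemma finsum_finsum_eq_sum_sum {α β M : Type*} [AddCommMonoid M] (f : α → β → M)
    {s : Finset α} {t : Finset β} (h : ∀ a b, f a b ≠ 0 → a ∈ s ∧ b ∈ t) :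
    ∑ᶠ a, ∑ᶠ b, f a b = ∑ a ∈ s, ∑ b ∈ t, f a b := by
  have inner : ∀ a, ∑ᶠ b, f a b = ∑ b ∈ t, f a b := fun a =>
    finsum_eq_sum_of_support_subset _ fun b hb => (h a b hb).2
  simp only [inner]
  refine finsum_eq_sum_of_support_subset _ fun a ha => ?_
  by_contra has
  exact ha (sum_eq_zero fun b _ => by_contra fun hab => has (h a b hab).1)

lemma finsum_finsum_ite_eq_sum_range_norm_sq {α : Type*} {q : ℕ} [NeZero q] {w : α → ℂ}
    (hw : (Function.support w).Finite) (x : α → ZMod q) :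
    ∑ᶠ z₁, ∑ᶠ z₂, (if x z₁ = x z₂ then w z₁ * conj (w z₂) else 0) =
      (((q : ℝ)⁻¹ * ∑ a ∈ range q, ‖∑ᶠ z, w z * eChar q (a * x z)‖ ^ 2 : ℝ) : ℂ) := by
  have hs : ∀ z, w z ≠ 0 → z ∈ hw.toFinset := fun z hz => hw.mem_toFinset.mpr hz
  have inner : ∀ a : ℕ, ∑ᶠ z, w z * eChar q (a * x z) =
      ∑ z ∈ hw.toFinset, w z * eChar q (a * x z) := fun a =>
    finsum_eq_sum_of_support_subset _ fun z hz => hs z (left_ne_zero_of_mul hz)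
  rw [finsum_finsum_eq_sum_sum _ fun z₁ z₂ h => ⟨hs z₁ ?_, hs z₂ ?_⟩]
  · push_cast
    simp only [inner]
    rw [sum_range_norm_sq_sum_eChar_mul, inv_mul_cancel_left₀ (NeZero.ne _)]
  all_goals contrapose! h; simp [h]

lemma isUnit_intCast_of_gcd_mul_eq_one {q : ℕ} {u v : ℤ} (h : Int.gcd (u * v) q = 1) :
    IsUnit (u : ZMod q) ∧ IsUnit (v : ZMod q) := by
  have huv : IsUnit ((u * v : ℤ) : ZMod q) := (ZMod.coe_int_isUnit_iff_isCoprime _ _).mpr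
    (Int.isCoprime_iff_gcd_eq_one.mpr (by rwa [Int.gcd_comm]))
  rwa [Int.cast_mul, IsUnit.mul_iff] at huv

lemma mul_eq_mul_iff_mul_eq_mul_of_mul_eq_one {R : Type*} [CommRing R] {a₁ a₂ b₁ b₂ b₁' b₂' : R}
    (h₁ : b₁ * b₁' = 1) (h₂ : b₂ * b₂' = 1) : a₁ * b₂ = a₂ * b₁ ↔ a₁ * b₁' = a₂ * b₂' := by
  constructor <;> intro h
  · linear_combination (b₁' * b₂') * h - (a₁ * b₁') * h₂ + (a₂ * b₂') * h₁
  · linear_combination (b₁ * b₂) * h - (a₁ * b₂) * h₁ + (a₂ * b₁) * h₂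

namespace GaussianInt

variable {q : ℕ} {z₁ z₂ : GaussianInt}

lemma natCast_dvd_cross_iff :
    (q : ℤ) ∣ z₁.re * z₂.im - z₂.re * z₁.im ↔
      (z₁.re : ZMod q) * z₂.im = z₂.re * z₁.im := by
  rw [← ZMod.intCast_zmod_eq_zero_iff_dvd, Int.cast_sub, Int.cast_mul, Int.cast_mul, sub_eq_zero]

lemma natCast_dvd_cross_iff_re_mul_inv_im_eq (h₁ : Int.gcd (z₁.re * z₁.im) q = 1)
    (h₂ : Int.gcd (z₂.re * z₂.im) q = 1) :
    (q : ℤ) ∣ z₁.re * z₂.im - z₂.re * z₁.im ↔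
      (z₁.re : ZMod q) * (z₁.im : ZMod q)⁻¹ = z₂.re * (z₂.im : ZMod q)⁻¹ :=
  natCast_dvd_cross_iff.trans <| mul_eq_mul_iff_mul_eq_mul_of_mul_eq_one
    (ZMod.mul_inv_of_unit _ (isUnit_intCast_of_gcd_mul_eq_one h₁).2)
    (ZMod.mul_inv_of_unit _ (isUnit_intCast_of_gcd_mul_eq_one h₂).2)

lemma natCast_dvd_cross_iff_inv_re_mul_im_eq (h₁ : Int.gcd (z₁.re * z₁.im) q = 1)
    (h₂ : Int.gcd (z₂.re * z₂.im) q = 1) :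
    (q : ℤ) ∣ z₁.re * z₂.im - z₂.re * z₁.im ↔
      (z₁.re : ZMod q)⁻¹ * z₁.im = (z₂.re : ZMod q)⁻¹ * z₂.im := by
  rw [natCast_dvd_cross_iff, eq_comm, mul_comm (z₂.re : ZMod q), mul_comm (z₁.re : ZMod q),
    mul_comm _ (z₁.im : ZMod q), mul_comm _ (z₂.im : ZMod q)]
  exact mul_eq_mul_iff_mul_eq_mul_of_mul_eq_one
    (ZMod.mul_inv_of_unit _ (isUnit_intCast_of_gcd_mul_eq_one h₁).1)
    (ZMod.mul_inv_of_unit _ (isUnit_intCast_of_gcd_mul_eq_one h₂).1)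

end GaussianInt

lemma detSum''_eq_sum_range_norm_sq_of_dvd_iff (c : GaussianInt → ℂ)
    (hfin : (Function.support c).Finite) {q : ℕ} [NeZero q] (x : GaussianInt → ZMod q)
    (hx : ∀ z₁ z₂ : GaussianInt, Int.gcd (z₁.re * z₁.im) q = 1 →
      Int.gcd (z₂.re * z₂.im) q = 1 →
      ((q : ℤ) ∣ z₁.re * z₂.im - z₂.re * z₁.im ↔ x z₁ = x z₂)) :
    detSum'' c q = (((q : ℝ)⁻¹ * ∑ a ∈ range q,
        ‖∑ᶠ z : GaussianInt,
          if Int.gcd (z.re * z.im) q = 1 then c z * eChar q (a * x z) else 0‖ ^ 2 : ℝ) : ℂ) := by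
  set w : GaussianInt → ℂ := fun z => if Int.gcd (z.re * z.im) q = 1 then c z else 0
  have hw : (Function.support w).Finite :=
    hfin.subset fun z hz => by contrapose! hz; simp [w, Function.notMem_support.mp hz]
  calc detSum'' c q = ∑ᶠ z₁, ∑ᶠ z₂, if x z₁ = x z₂ then w z₁ * conj (w z₂) else 0 := by
        refine finsum_congr fun z₁ => finsum_congr fun z₂ => ?_
        by_cases h₁ : Int.gcd (z₁.re * z₁.im) q = 1 <;>
          by_cases h₂ : Int.gcd (z₂.re * z₂.im) q = 1 <;> simp [w, h₁, h₂, hx z₁ z₂]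
    _ = _ := by
        rw [finsum_finsum_ite_eq_sum_range_norm_sq hw x]
        simp only [w, ite_mul, zero_mul]

/-- **Symmetry (2.1).**
`S''_q = q⁻¹ ∑_{a mod q} |∑_{(uv,q)=1} c(z) e(a u v̄ / q)|²
       = q⁻¹ ∑_{a mod q} |∑_{(uv,q)=1} c(z) e(a ū v / q)|²`. -/
theorem detSum''_symmetry (c : GaussianInt → ℂ) (hfin : (Function.support c).Finite)
    (q : ℕ) (hq : 1 ≤ q) :
    detSum'' c q = (((q : ℝ)⁻¹ * ∑ a ∈ Finset.range q,
        norm (∑ᶠ z : GaussianInt,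
          if Int.gcd (z.re * z.im) q = 1 then
            c z * eChar q ((a : ZMod q) * (z.re : ZMod q) * ((z.im : ZMod q))⁻¹)
          else 0) ^ 2 : ℝ) : ℂ) ∧
    detSum'' c q = (((q : ℝ)⁻¹ * ∑ a ∈ Finset.range q,
        norm (∑ᶠ z : GaussianInt,
          if Int.gcd (z.re * z.im) q = 1 then
            c z * eChar q ((a : ZMod q) * ((z.re : ZMod q))⁻¹ * (z.im : ZMod q))
          else 0) ^ 2 : ℝ) : ℂ) := by
  have : NeZero q := NeZero.of_pos hq
  constructor
  · simpa only [mul_assoc] using detSum''_eq_sum_range_norm_sq_of_dvd_iff c hfin _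
      fun _ _ => GaussianInt.natCast_dvd_cross_iff_re_mul_inv_im_eq
  · simpa only [mul_assoc] using detSum''_eq_sum_range_norm_sq_of_dvd_iff c hfin _
      fun _ _ => GaussianInt.natCast_dvd_cross_iff_inv_re_mul_im_eq
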